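/- Let W ⊆ C^ω be M-prefix-independent and M-cycle-consistent for a skeleton M, let m be a state of M, and let Λ, Λ' be nonempty sets of cycles on m. If for every γ' ∈ Λ' there exists γ ∈ Λ such that the combined cycle γγ' is winning on m, then there exists a single γ ∈ Λ such that γγ' is winning on m for all γ' ∈ Λ'. -/

import Mathlib

/-!
Suppose no single `γ ∈ Λ` works. Then every `γ ∈ Λ` has a `γ' ∈ Λ'` with `γγ'` losing, and
every `γ' ∈ Λ'` has a `γ ∈ Λ` with `γγ'` winning, so there are `γ₀, γ₁, … ∈ Λ` and
`γ'₀, γ'₁, … ∈ Λ'` with `γₖγ'ₖ` losing and `γₖ₊₁γ'ₖ` winning. By cycle consistency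
`(γ₀γ'₀)(γ₁γ'₁)⋯` is losing after `w`. Regrouped, the same word is `wγ₀` followed by
`(γ'₀γ₁)(γ'₁γ₂)⋯`; since `wγ₀` reaches `m` again, prefix independence makes each rotation
`γ'ₖγₖ₊₁` winning, so by cycle consistency the word is also winning.
-/


/-- Concatenation of a finite word with an infinite word. -/
def app {C : Type*} : List C → (ℕ → C) → (ℕ → C)
  | [], w' => w'
  | c :: u, w' => fun i =>
    match i with
    | 0 => c
    | j + 1 => app u w' j

/-- Extension of the update function of a skeleton to finite words. -/
def updStar {C M : Type*} (upd : M → C → M) (m : M) (w : List C) : M :=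
  w.foldl upd m

/-- The infinite word `γ^ω` obtained by repeating a (nonempty) finite word forever. -/
def periodic {C : Type*} [Inhabited C] (γ : List C) : ℕ → C :=
  fun i => γ.getD (i % γ.length) default

/-- The infinite word obtained by concatenating the (nonempty) finite words
`ws 0, ws 1, ws 2, …`. -/
def concatSeq {C : Type*} [Inhabited C] (ws : ℕ → List C) : ℕ → C :=
  fun i => (((List.range (i + 1)).map ws).flatten).getD i default

/-- `W` is `M`-prefix-independent: any two finite words reaching the same state of the
skeleton from the initial state have the same winning continuations. -/
def PrefIndep {C M : Type*} (upd : M → C → M) (init : M) (W : Set (ℕ → C)) : Prop :=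
  ∀ w₁ w₂ : List C, updStar upd init w₁ = updStar upd init w₂ →
    ∀ w' : ℕ → C, (app w₁ w' ∈ W ↔ app w₂ w' ∈ W)

/-- `W` is `M`-cycle-consistent: after any finite word `w`, any infinite concatenation of
winning (resp. losing) cycles on the state reached by `w` yields a winning (resp. losing)
continuation of `w`. -/
def CycleConsistent {C M : Type*} [Inhabited C] (upd : M → C → M) (init : M)
    (W : Set (ℕ → C)) : Prop :=
  ∀ w : List C, ∀ ws : ℕ → List C,
    (∀ k, ws k ≠ [] ∧ updStar upd (updStar upd init w) (ws k) = updStar upd init w) →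
    ((∀ k, app w (periodic (ws k)) ∈ W) → app w (concatSeq ws) ∈ W) ∧
    ((∀ k, app w (periodic (ws k)) ∉ W) → app w (concatSeq ws) ∉ W)

section Words

variable {C : Type*}

theorem app_append (u v : List C) (x : ℕ → C) : app (u ++ v) x = app u (app v x) := by
  induction u with
  | nil => rfl
  | cons c u ih =>
    funext i
    cases i with
    | zero => rfl
    | succ j => exact congrFun ih j

theorem updStar_append {M : Type*} (upd : M → C → M) (m : M) (u v : List C) :
    updStar upd m (u ++ v) = updStar upd (updStar upd m u) v :=
  List.foldl_append

/-- The concatenation `ws 0 ++ ⋯ ++ ws (n - 1)` of the first `n` words. -/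
def concatPrefix (ws : ℕ → List C) (n : ℕ) : List C := ((List.range n).map ws).flatten

theorem concatPrefix_succ (ws : ℕ → List C) (n : ℕ) :
    concatPrefix ws (n + 1) = concatPrefix ws n ++ ws n := by
  simp [concatPrefix, List.range_succ]

theorem le_length_concatPrefix {ws : ℕ → List C} (hws : ∀ k, ws k ≠ []) (n : ℕ) :
    n ≤ (concatPrefix ws n).length := by
  induction n with
  | zero => simp
  | succ n ih =>
    rw [concatPrefix_succ, List.length_append]
    have := List.length_pos_iff.mpr (hws n)
    omega

theorem concatPrefix_prefix (ws : ℕ → List C) {m n : ℕ} (hmn : m ≤ n) :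
    concatPrefix ws m <+: concatPrefix ws n := by
  induction n, hmn using Nat.le_induction with
  | base => exact List.prefix_refl _
  | succ n _ ih => exact ih.trans (concatPrefix_succ ws n ▸ List.prefix_append _ _)

theorem append_concatPrefix_shift (w : List C) (a b : ℕ → List C) (n : ℕ) :
    w ++ a 0 ++ concatPrefix (fun k => b k ++ a (k + 1)) n
      = w ++ concatPrefix (fun k => a k ++ b k) n ++ a n := by
  induction n with
  | zero => simp [concatPrefix]
  | succ n ih => simp only [concatPrefix_succ, ← List.append_assoc, ih]

variable [Inhabited C]

theorem app_apply (u : List C) (x : ℕ → C) (i : ℕ) :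
    app u x i = if i < u.length then u.getD i default else x (i - u.length) := by
  induction u generalizing i with
  | nil => simp [app]
  | cons c u ih =>
    cases i with
    | zero => simp [app]
    | succ j => simp [app, ih j]

theorem periodic_append (u v : List C) : periodic (u ++ v) = app u (periodic (v ++ u)) := by
  funext i
  rw [app_apply]
  unfold periodic
  simp only [List.length_append]
  rcases Nat.eq_zero_or_pos (u.length + v.length) with hL | hL
  · simp [List.length_eq_zero_iff.mp (by omega : u.length = 0),
      List.length_eq_zero_iff.mp (by omega : v.length = 0)]
  split_ifs with hi
  · rw [Nat.mod_eq_of_lt (by omega), List.getD_append _ _ _ _ hi]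
  · -- both sides read position `r` of the rotated word `v ++ u`
    set r := (i - u.length) % (v.length + u.length)
    have hr : r < v.length + u.length := Nat.mod_lt _ (by omega)
    have hi_mod : i % (u.length + v.length) = (u.length + r) % (u.length + v.length) := by
      have := Nat.div_add_mod (i - u.length) (v.length + u.length)
      rw [show i = u.length + r + (v.length + u.length) * ((i - u.length) / (v.length + u.length))
        by omega, Nat.add_comm v.length, Nat.add_mul_mod_self_left]
    rw [hi_mod]
    rcases Nat.lt_or_ge r v.length with hrv | hrv
    · rw [Nat.mod_eq_of_lt (by omega), List.getD_append_right _ _ _ _ (by omega),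
        Nat.add_sub_cancel_left, List.getD_append _ _ _ _ hrv]
    · rw [show u.length + r = (r - v.length) + (u.length + v.length) by omega,
        Nat.add_mod_right, Nat.mod_eq_of_lt (by omega), List.getD_append _ _ _ _ (by omega),
        List.getD_append_right _ _ _ _ hrv]

theorem concatSeq_eq_getD {ws : ℕ → List C} (hws : ∀ k, ws k ≠ []) {i n : ℕ} (hin : i < n) :
    concatSeq ws i = (concatPrefix ws n).getD i default := by
  obtain ⟨t, ht⟩ := concatPrefix_prefix ws (show i + 1 ≤ n from hin)
  change (concatPrefix ws (i + 1)).getD i default = _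
  rw [← ht, List.getD_append]
  exact Nat.lt_of_lt_of_le (Nat.lt_succ_self i) (le_length_concatPrefix hws (i + 1))

theorem app_concatSeq_eq_getD {ws : ℕ → List C} (hws : ∀ k, ws k ≠ []) (u : List C)
    {i n : ℕ} (hi : i < u.length + n) :
    app u (concatSeq ws) i = (u ++ concatPrefix ws n).getD i default := by
  rw [app_apply]
  split_ifs with hiu
  · rw [List.getD_append _ _ _ _ hiu]
  · rw [concatSeq_eq_getD hws (show i - u.length < n by omega),
      List.getD_append_right _ _ _ _ (by omega)]

theorem app_concatSeq_regroup (w : List C) {a b : ℕ → List C}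
    (ha : ∀ k, a k ≠ []) (hb : ∀ k, b k ≠ []) :
    app w (concatSeq fun k => a k ++ b k)
      = app (w ++ a 0) (concatSeq fun k => b k ++ a (k + 1)) := by
  have hab : ∀ k, a k ++ b k ≠ [] := fun k => by simp [ha k]
  have hba : ∀ k, b k ++ a (k + 1) ≠ [] := fun k => by simp [hb k]
  funext i
  rw [app_concatSeq_eq_getD hab w (show i < w.length + (i + 1) by omega),
    app_concatSeq_eq_getD hba (w ++ a 0) (show i < (w ++ a 0).length + (i + 1) by omega),
    append_concatPrefix_shift]
  refine (List.getD_append _ _ _ _ ?_).symm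
  have := le_length_concatPrefix hab (i + 1)
  rw [List.length_append]
  omega

end Words

section Skeleton

variable {C M : Type*}

def IsCycle (upd : M → C → M) (m : M) (γ : List C) : Prop :=
  γ ≠ [] ∧ updStar upd m γ = m

variable {upd : M → C → M}

theorem IsCycle.append {m : M} {u v : List C} (hu : IsCycle upd m u) (hv : IsCycle upd m v) :
    IsCycle upd m (u ++ v) :=
  ⟨by simp [hu.1], by rw [updStar_append, hu.2, hv.2]⟩

variable [Inhabited C] {init : M} {W : Set (ℕ → C)}

theorem PrefIndep.app_periodic_append_mem_iff (hpi : PrefIndep upd init W) {w w' u v : List C}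
    (h : updStar upd init (w ++ u) = updStar upd init w') :
    app w (periodic (u ++ v)) ∈ W ↔ app w' (periodic (v ++ u)) ∈ W := by
  rw [periodic_append, ← app_append]
  exact hpi _ _ h _

theorem CycleConsistent.false_of_alternating (hpi : PrefIndep upd init W)
    (hcc : CycleConsistent upd init W) {m : M} {w : List C} (hw : updStar upd init w = m)
    {a b : ℕ → List C} (ha : ∀ k, IsCycle upd m (a k)) (hb : ∀ k, IsCycle upd m (b k))
    (hlose : ∀ k, app w (periodic (a k ++ b k)) ∉ W)
    (hwin : ∀ k, app w (periodic (a (k + 1) ++ b k)) ∈ W) : False := by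
  have hreach : ∀ k, updStar upd init (w ++ a k) = m := fun k => by
    rw [updStar_append, hw, (ha k).2]
  have hlosing : app w (concatSeq fun k => a k ++ b k) ∉ W :=
    (hcc w _ fun k => hw ▸ (ha k).append (hb k)).2 hlose
  have hwin_rotated : ∀ k, app (w ++ a 0) (periodic (b k ++ a (k + 1))) ∈ W := fun k =>
    (hpi.app_periodic_append_mem_iff (by rw [hreach, hreach])).mp (hwin k)
  have hwinning : app (w ++ a 0) (concatSeq fun k => b k ++ a (k + 1)) ∈ W :=
    (hcc (w ++ a 0) _ fun k => hreach 0 ▸ (hb k).append (ha (k + 1))).1 hwin_rotated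
  rw [app_concatSeq_regroup w (fun k => (ha k).1) (fun k => (hb k).1)] at hlosing
  exact hlosing hwinning

end Skeleton

theorem stmt4_general {C M : Type*} [Inhabited C]
    (upd : M → C → M) (init : M) (W : Set (ℕ → C))
    (hpi : PrefIndep upd init W) (hcc : CycleConsistent upd init W)
    (m : M) (w : List C) (hw : updStar upd init w = m)
    (Λ Λ' : Set (List C)) (hΛne : Λ.Nonempty)
    (hΛ : ∀ γ ∈ Λ, γ ≠ [] ∧ updStar upd m γ = m)
    (hΛ' : ∀ γ' ∈ Λ', γ' ≠ [] ∧ updStar upd m γ' = m)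
    (h : ∀ γ' ∈ Λ', ∃ γ ∈ Λ, app w (periodic (γ ++ γ')) ∈ W) :
    ∃ γ ∈ Λ, ∀ γ' ∈ Λ', app w (periodic (γ ++ γ')) ∈ W := by
  by_contra! hcon
  choose! lose hloseΛ' hlose using hcon
  choose! win hwinΛ hwin using h
  obtain ⟨γ₀, hγ₀⟩ := hΛne
  have hmaps : Set.MapsTo (win ∘ lose) Λ Λ := fun γ hγ => hwinΛ _ (hloseΛ' γ hγ)
  have ha : ∀ k, (win ∘ lose)^[k] γ₀ ∈ Λ := fun k => hmaps.iterate k hγ₀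
  refine hcc.false_of_alternating hpi hw (a := fun k => (win ∘ lose)^[k] γ₀)
    (b := fun k => lose ((win ∘ lose)^[k] γ₀)) (fun k => hΛ _ (ha k))
    (fun k => hΛ' _ (hloseΛ' _ (ha k))) (fun k => hlose _ (ha k)) fun k => ?_
  rw [Function.iterate_succ_apply']
  exact hwin _ (hloseΛ' _ (ha k))

/-- if every cycle of `Λ'` can be made winning by prepending some cycle of
`Λ`, then a single cycle of `Λ` makes all cycles of `Λ'` winning. -/
theorem stmt4 {C M : Type*} [Inhabited C] [Finite M]
    (upd : M → C → M) (init : M) (W : Set (ℕ → C))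
    (hpi : PrefIndep upd init W) (hcc : CycleConsistent upd init W)
    (m : M) (w : List C) (hw : updStar upd init w = m)
    (Λ Λ' : Set (List C)) (hΛne : Λ.Nonempty) (hΛ'ne : Λ'.Nonempty)
    (hΛ : ∀ γ ∈ Λ, γ ≠ [] ∧ updStar upd m γ = m)
    (hΛ' : ∀ γ' ∈ Λ', γ' ≠ [] ∧ updStar upd m γ' = m)
    (h : ∀ γ' ∈ Λ', ∃ γ ∈ Λ, app w (periodic (γ ++ γ')) ∈ W) :
    ∃ γ ∈ Λ, ∀ γ' ∈ Λ', app w (periodic (γ ++ γ')) ∈ W :=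
  stmt4_general upd init W hpi hcc m w hw Λ Λ' hΛne hΛ hΛ' h
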